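/- For all integers 1 ≤ k ≤ n, the number of maximal primitive subsets of {k, k+1, …, n} is at least the number of maximal primitive subsets of {k+1, …, n}, and at most twice that number. Here a primitive subset S of an interval I of integers is maximal if for every j in I \ S the set S ∪ {j} is not primitive. -/

import Mathlib

def IsPrimitive (S : Finset ℕ) : Prop := ∀ a ∈ S, ∀ b ∈ S, a ∣ b → a = b

noncomputable def maximalPrimCount (T : Finset ℕ) : ℕ :=
  Nat.card {S : Finset ℕ // S ⊆ T ∧ IsPrimitive S ∧
    ∀ j ∈ T, j ∉ S → ¬ IsPrimitive (insert j S)}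

/-!
Let `k ∉ T` be such that no element of `T` divides `k`.
A maximal primitive subset `S` of `T` yields one of `insert k T`: `insert k S` if that is
still primitive, `S` itself otherwise; erasing `k` recovers `S`, so this is injective.
Conversely a maximal primitive subset `S` of `insert k T` either avoids `k`, and is then
maximal in `T`, or contains `k`. In the latter case extend `S.erase k` to a maximal
primitive subset `S'` of `T`: everything added is a multiple of `k` (anything else could be
added to `S` too), so `S` is `k` together with the non-multiples of `k` in `S'`. Hence there
are at most two maximal primitive subsets of `insert k T` per one of `T`.
-/

def IsMaximalPrimitive (T S : Finset ℕ) : Prop :=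
  S ⊆ T ∧ IsPrimitive S ∧ ∀ j ∈ T, j ∉ S → ¬ IsPrimitive (insert j S)

def maximalPrimitives (T : Finset ℕ) : Set (Finset ℕ) := {S | IsMaximalPrimitive T S}

theorem maximalPrimCount_eq_ncard (T : Finset ℕ) :
    maximalPrimCount T = (maximalPrimitives T).ncard := rfl

theorem IsPrimitive.subset {S S' : Finset ℕ} (h : S ⊆ S') (hS' : IsPrimitive S') :
    IsPrimitive S :=
  fun a ha b hb => hS' a (h ha) b (h hb)

theorem IsPrimitive.insert {S : Finset ℕ} {j : ℕ} (hS : IsPrimitive S)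
    (hdvd : ∀ a ∈ S, a ∣ j → a = j) (hdvd' : ∀ b ∈ S, j ∣ b → j = b) :
    IsPrimitive (insert j S) := by
  intro a ha b hb hab
  rcases Finset.mem_insert.1 ha with rfl | haS
  · rcases Finset.mem_insert.1 hb with rfl | hbS
    · rfl
    · exact hdvd' b hbS hab
  · rcases Finset.mem_insert.1 hb with rfl | hbS
    · exact hdvd a haS hab
    · exact hS a haS b hbS hab

theorem finite_maximalPrimitives (T : Finset ℕ) : (maximalPrimitives T).Finite :=
  T.powerset.finite_toSet.subset fun _ hS => Finset.mem_powerset.2 hS.1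

theorem exists_isMaximalPrimitive_superset {T P : Finset ℕ} (hPT : P ⊆ T)
    (hP : IsPrimitive P) : ∃ S, P ⊆ S ∧ IsMaximalPrimitive T S := by
  have hfin : {S : Finset ℕ | S ⊆ T ∧ IsPrimitive S}.Finite :=
    T.powerset.finite_toSet.subset fun _ hS => Finset.mem_powerset.2 hS.1
  obtain ⟨S, hPS, ⟨hST, hS⟩, hmax⟩ := hfin.exists_le_maximal ⟨hPT, hP⟩
  refine ⟨S, hPS, hST, hS, fun j hjT hjS hjprim => hjS ?_⟩
  exact hmax ⟨Finset.insert_subset hjT hST, hjprim⟩ (Finset.subset_insert j S)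
    (Finset.mem_insert_self j S)

def insertNonMultiples (k : ℕ) (S : Finset ℕ) : Finset ℕ := insert k (S.filter (¬ k ∣ ·))

section InsertOne

variable {T S : Finset ℕ} {k : ℕ}

theorem IsMaximalPrimitive.of_insert_of_notMem (hS : IsMaximalPrimitive (insert k T) S)
    (hkS : k ∉ S) : IsMaximalPrimitive T S := by
  obtain ⟨hST, hS, hmax⟩ := hS
  refine ⟨fun x hx => ?_, hS, fun j hj => hmax j (Finset.mem_insert_of_mem hj)⟩
  exact (Finset.mem_insert.1 (hST hx)).resolve_left (ne_of_mem_of_not_mem hx hkS)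

theorem IsMaximalPrimitive.insert_of_isPrimitive (hS : IsMaximalPrimitive T S)
    (hkS : IsPrimitive (insert k S)) : IsMaximalPrimitive (insert k T) (insert k S) := by
  obtain ⟨hST, -, hmax⟩ := hS
  refine ⟨Finset.insert_subset_insert k hST, hkS, fun j hj hjS hjprim => ?_⟩
  rcases Finset.mem_insert.1 hj with rfl | hjT
  · exact hjS (Finset.mem_insert_self j S)
  · exact hmax j hjT (fun h => hjS (Finset.mem_insert_of_mem h))
      (hjprim.subset (Finset.insert_subset_insert j (Finset.subset_insert k S)))

theorem IsMaximalPrimitive.insert_of_not_isPrimitive (hS : IsMaximalPrimitive T S)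
    (hkS : ¬ IsPrimitive (insert k S)) : IsMaximalPrimitive (insert k T) S := by
  obtain ⟨hST, hS, hmax⟩ := hS
  refine ⟨hST.trans (Finset.subset_insert k T), hS, fun j hj hjS => ?_⟩
  rcases Finset.mem_insert.1 hj with rfl | hjT
  · exact hkS
  · exact hmax j hjT hjS

theorem ncard_maximalPrimitives_le_insert (hk : k ∉ T) :
    (maximalPrimitives T).ncard ≤ (maximalPrimitives (insert k T)).ncard := by
  classical
  let f : Finset ℕ → Finset ℕ := fun S => if IsPrimitive (insert k S) then insert k S else S
  have hf : ∀ S ∈ maximalPrimitives T, f S ∈ maximalPrimitives (insert k T) := by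
    intro S hS
    by_cases hkS : IsPrimitive (insert k S)
    · simp only [f, if_pos hkS]
      exact hS.insert_of_isPrimitive hkS
    · simp only [f, if_neg hkS]
      exact hS.insert_of_not_isPrimitive hkS
  have hinv : Set.LeftInvOn (Finset.erase · k) f (maximalPrimitives T) := by
    intro S hS
    have hkS : k ∉ S := fun h => hk (hS.1 h)
    by_cases h : IsPrimitive (insert k S)
    · simp [f, h, Finset.erase_insert hkS]
    · simp [f, h, Finset.erase_eq_of_notMem hkS]
  exact Set.ncard_le_ncard_of_injOn f hf hinv.injOn (finite_maximalPrimitives _)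

theorem IsMaximalPrimitive.eq_insertNonMultiples (hk : k ∉ T) (hndvd : ∀ j ∈ T, ¬ j ∣ k)
    (hS : IsMaximalPrimitive (insert k T) S) (hkS : k ∈ S) {S' : Finset ℕ}
    (hS' : IsMaximalPrimitive T S') (hsub : S.erase k ⊆ S') :
    S = insertNonMultiples k S' := by
  obtain ⟨-, hSprim, hSmax⟩ := hS
  rw [insertNonMultiples, ← Finset.insert_erase hkS]
  congr 1
  ext x
  simp only [Finset.mem_filter]
  constructor
  · intro hx
    exact ⟨hsub hx, fun hkx => Finset.ne_of_mem_erase hx (hSprim k hkS x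
      (Finset.mem_of_mem_erase hx) hkx).symm⟩
  · rintro ⟨hxS', hkx⟩
    by_contra hx
    have hxT : x ∈ T := hS'.1 hxS'
    have hxS : x ∉ S := fun h => hx (Finset.mem_erase.2 ⟨fun hxk => hk (hxk ▸ hxT), h⟩)
    refine hSmax x (Finset.mem_insert_of_mem hxT) hxS (hSprim.insert ?_ ?_)
    -- apart from `k`, the elements of `S` lie in the primitive set `S'` together with `x`
    · intro a ha hax
      by_cases hak : a = k
      · exact absurd (hak ▸ hax) hkx
      · exact hS'.2.1 a (hsub (Finset.mem_erase.2 ⟨hak, ha⟩)) x hxS' hax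
    · intro b hb hxb
      by_cases hbk : b = k
      · exact absurd (hbk ▸ hxb) (hndvd x hxT)
      · exact hS'.2.1 x hxS' b (hsub (Finset.mem_erase.2 ⟨hbk, hb⟩)) hxb

theorem maximalPrimitives_insert_subset (hk : k ∉ T) (hndvd : ∀ j ∈ T, ¬ j ∣ k) :
    maximalPrimitives (insert k T) ⊆
      maximalPrimitives T ∪ insertNonMultiples k '' maximalPrimitives T := by
  intro S hS
  by_cases hkS : k ∈ S
  · right
    have hST : S.erase k ⊆ T := fun x hx =>
      (Finset.mem_insert.1 (hS.1 (Finset.mem_of_mem_erase hx))).resolve_left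
        (Finset.ne_of_mem_erase hx)
    obtain ⟨S', hsub, hS'⟩ :=
      exists_isMaximalPrimitive_superset hST (hS.2.1.subset (Finset.erase_subset k S))
    exact ⟨S', hS', (hS.eq_insertNonMultiples hk hndvd hkS hS' hsub).symm⟩
  · exact Or.inl (hS.of_insert_of_notMem hkS)

theorem ncard_maximalPrimitives_insert_le (hk : k ∉ T) (hndvd : ∀ j ∈ T, ¬ j ∣ k) :
    (maximalPrimitives (insert k T)).ncard ≤ 2 * (maximalPrimitives T).ncard := by
  have hfin := finite_maximalPrimitives T
  calc (maximalPrimitives (insert k T)).ncard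
      ≤ (maximalPrimitives T ∪ insertNonMultiples k '' maximalPrimitives T).ncard :=
        Set.ncard_le_ncard (maximalPrimitives_insert_subset hk hndvd)
          (hfin.union (hfin.image _))
    _ ≤ (maximalPrimitives T).ncard + (insertNonMultiples k '' maximalPrimitives T).ncard :=
        Set.ncard_union_le _ _
    _ ≤ (maximalPrimitives T).ncard + (maximalPrimitives T).ncard :=
        Nat.add_le_add_left (Set.ncard_image_le hfin) _
    _ = 2 * (maximalPrimitives T).ncard := (two_mul _).symm

end InsertOne

/-- The number of maximal primitive subsets of `{k, …, n}` is at least the number of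
maximal primitive subsets of `{k+1, …, n}` and at most twice that number. -/
theorem maximalPrimCount_step (k n : ℕ) (hk : 1 ≤ k) (hkn : k ≤ n) :
    maximalPrimCount (Finset.Icc (k + 1) n) ≤ maximalPrimCount (Finset.Icc k n) ∧
    maximalPrimCount (Finset.Icc k n) ≤ 2 * maximalPrimCount (Finset.Icc (k + 1) n) := by
  have hk' : k ∉ Finset.Icc (k + 1) n := by simp
  have hndvd : ∀ j ∈ Finset.Icc (k + 1) n, ¬ j ∣ k := fun j hj hjk => by
    have := Nat.le_of_dvd hk hjk
    grind
  have hT : Finset.Icc k n = insert k (Finset.Icc (k + 1) n) := by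
    rw [Finset.Icc_add_one_left_eq_Ioc, Finset.Ioc_insert_left hkn]
  simp only [maximalPrimCount_eq_ncard, hT]
  exact ⟨ncard_maximalPrimitives_le_insert hk', ncard_maximalPrimitives_insert_le hk' hndvd⟩
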